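/- For any integer k >= 1, the power sum polynomial satisfies S_k(n) = sum_{j=1}^{k} (-1)^{k-j} * j! * S2(k, j) * C(n+j, j+1) for all positive integers n. -/
import Mathlib


/-- `S2 n j` is the Stirling number of the second kind. -/
def S2 : ℕ → ℕ → ℕ
  | 0, 0 => 1
  | 0, _ + 1 => 0
  | _ + 1, 0 => 0
  | n + 1, j + 1 => (j + 1) * S2 n (j + 1) + S2 n j

/-- rising factorial x(x+1)...(x+j-1) over ℚ -/
def ascQ (x : ℚ) : ℕ → ℚ
  | 0 => 1
  | j + 1 => ascQ x j * (x + j)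

lemma S2_eq_zero : ∀ k j : ℕ, k < j → S2 k j = 0
  | 0, _ + 1, _ => rfl
  | k + 1, j + 1, h => by
      have h' : k < j := Nat.lt_of_succ_lt_succ h
      have h'' : k < j + 1 := h'.trans (Nat.lt_succ_self _)
      simp [S2, S2_eq_zero k (j+1) h'', S2_eq_zero k j h']

lemma S2_zero_right (k : ℕ) (hk : 1 ≤ k) : S2 k 0 = 0 := by
  obtain ⟨m, rfl⟩ : ∃ m, k = m + 1 := ⟨k - 1, by omega⟩
  rfl

lemma key (k : ℕ) (x : ℚ) :
    ∑ j ∈ Finset.range (k + 1), (-1 : ℚ) ^ j * (S2 k j : ℚ) * ascQ x j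
      = (-1 : ℚ) ^ k * x ^ k := by
  induction k with
  | zero => simp [S2, ascQ]
  | succ k ih =>
      set f : ℕ → ℚ := fun j => (-1 : ℚ) ^ j * (j : ℚ) * (S2 k j : ℚ) * ascQ x j with hf
      have hU : ∑ j ∈ Finset.range (k + 2), f j = ∑ j ∈ Finset.range (k + 1), f j := by
        rw [Finset.sum_range_succ]
        simp [hf, S2_eq_zero k (k+1) (Nat.lt_succ_self _)]
      have hU' : ∑ j ∈ Finset.range (k + 2), f j
          = ∑ j ∈ Finset.range (k + 1), f (j + 1) := by
        rw [Finset.sum_range_succ']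
        simp [hf]
      have hB : ∑ j ∈ Finset.range (k + 1),
          (-1 : ℚ) ^ j * ((j : ℚ) + 1) * (S2 k (j + 1) : ℚ) * ascQ x (j + 1)
          = - ∑ j ∈ Finset.range (k + 1), f j := by
        rw [← hU, hU']
        rw [← Finset.sum_neg_distrib]
        apply Finset.sum_congr rfl
        intro j _
        simp only [hf]
        push_cast
        ring
      calc ∑ j ∈ Finset.range (k + 1 + 1), (-1 : ℚ) ^ j * (S2 (k+1) j : ℚ) * ascQ x j
          = ∑ j ∈ Finset.range (k + 1),
              (-1 : ℚ) ^ (j+1) * (S2 (k+1) (j+1) : ℚ) * ascQ x (j+1) := by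
            rw [Finset.sum_range_succ']
            simp [S2]
        _ = ∑ j ∈ Finset.range (k + 1),
              (-((-1 : ℚ) ^ j * ((j : ℚ) + 1) * (S2 k (j+1) : ℚ) * ascQ x (j+1))
               + -((-1 : ℚ) ^ j * (S2 k j : ℚ) * (ascQ x j * (x + j)))) := by
            apply Finset.sum_congr rfl
            intro j _
            rw [show ascQ x (j+1) = ascQ x j * (x + j) from rfl]
            simp only [S2]
            push_cast
            ring
        _ = (- ∑ j ∈ Finset.range (k + 1),
              (-1 : ℚ) ^ j * ((j : ℚ) + 1) * (S2 k (j+1) : ℚ) * ascQ x (j+1))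
            + (- ∑ j ∈ Finset.range (k + 1),
              (-1 : ℚ) ^ j * (S2 k j : ℚ) * (ascQ x j * (x + j))) := by
            rw [Finset.sum_add_distrib, Finset.sum_neg_distrib, Finset.sum_neg_distrib]
        _ = (-1 : ℚ) ^ (k+1) * x ^ (k+1) := by
            rw [hB, neg_neg]
            have hsplit : ∑ j ∈ Finset.range (k + 1),
                (-1 : ℚ) ^ j * (S2 k j : ℚ) * (ascQ x j * (x + j))
                = x * (∑ j ∈ Finset.range (k + 1), (-1 : ℚ) ^ j * (S2 k j : ℚ) * ascQ x j)
                  + ∑ j ∈ Finset.range (k + 1), f j := by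
              rw [Finset.mul_sum, ← Finset.sum_add_distrib]
              apply Finset.sum_congr rfl
              intro j _
              simp only [hf]
              ring
            rw [hsplit, ih]
            ring

lemma ascQ_cast (n j : ℕ) :
    ascQ ((n : ℚ) + 1) j = (j.factorial : ℚ) * ((n + j).choose j : ℚ) := by
  induction j with
  | zero => simp [ascQ]
  | succ j ih =>
      have hnat : (n + j + 1) * (n + j).choose j = (n + j + 1).choose (j + 1) * (j + 1) :=
        Nat.add_one_mul_choose_eq (n + j) j
      have hq : ((n : ℚ) + j + 1) * ((n + j).choose j : ℚ)
          = ((n + j + 1).choose (j + 1) : ℚ) * ((j : ℚ) + 1) := by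
        exact_mod_cast congrArg (fun m : ℕ => (m : ℚ)) hnat
      show ascQ ((n : ℚ) + 1) j * _ = _
      rw [ih]
      have h2 : ((n : ℕ) + (j + 1)).choose (j + 1) = (n + j + 1).choose (j + 1) := by
        ring_nf
      rw [h2]
      push_cast [Nat.factorial_succ]
      linear_combination (j.factorial : ℚ) * hq

lemma key2 (k : ℕ) (hk : 1 ≤ k) (x : ℚ) :
    ∑ j ∈ Finset.Icc 1 k, (-1 : ℚ) ^ (k - j) * (S2 k j : ℚ) * ascQ x j = x ^ k := by
  have h := key k x
  have hrange : ∑ j ∈ Finset.range (k + 1), (-1 : ℚ) ^ j * (S2 k j : ℚ) * ascQ x j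
      = ∑ j ∈ Finset.Icc 1 k, (-1 : ℚ) ^ j * (S2 k j : ℚ) * ascQ x j := by
    rw [Finset.range_eq_Ico, Finset.sum_eq_sum_Ico_succ_bot (by omega)]
    rw [S2_zero_right k hk, Finset.Ico_add_one_right_eq_Icc]
    simp
  have hconv : ∑ j ∈ Finset.Icc 1 k, (-1 : ℚ) ^ (k - j) * (S2 k j : ℚ) * ascQ x j
      = (-1 : ℚ) ^ k * ∑ j ∈ Finset.Icc 1 k, (-1 : ℚ) ^ j * (S2 k j : ℚ) * ascQ x j := by
    rw [Finset.mul_sum]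
    apply Finset.sum_congr rfl
    intro j hj
    have hjk : j ≤ k := (Finset.mem_Icc.mp hj).2
    have hpow : (-1 : ℚ) ^ (k - j) = (-1 : ℚ) ^ k * (-1 : ℚ) ^ j := by
      have h1 : (-1 : ℚ) ^ (k - j) * (-1 : ℚ) ^ j = (-1 : ℚ) ^ k := by
        rw [← pow_add, Nat.sub_add_cancel hjk]
      have hsq : (-1 : ℚ) ^ j * (-1 : ℚ) ^ j = 1 := by
        rw [← mul_pow]; norm_num
      calc (-1 : ℚ) ^ (k - j) = (-1 : ℚ) ^ (k - j) * ((-1 : ℚ) ^ j * (-1 : ℚ) ^ j) := by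
            rw [hsq, mul_one]
        _ = ((-1 : ℚ) ^ (k - j) * (-1 : ℚ) ^ j) * (-1 : ℚ) ^ j := by ring
        _ = (-1 : ℚ) ^ k * (-1 : ℚ) ^ j := by rw [h1]
    rw [hpow]; ring
  rw [hconv, ← hrange, h, ← mul_assoc, ← mul_pow]
  norm_num

theorem powerSum_binomial (k n : ℕ) (hk : 1 ≤ k) (hn : 1 ≤ n) :
    ∑ i ∈ Finset.Icc 1 n, (i : ℚ) ^ k =
      ∑ j ∈ Finset.Icc 1 k,
        (-1 : ℚ) ^ (k - j) * (j.factorial : ℚ) * (S2 k j : ℚ) * ((n + j).choose (j + 1) : ℚ) := by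
  induction n, hn using Nat.le_induction with
  | base =>
      rw [show Finset.Icc 1 1 = {1} from rfl, Finset.sum_singleton]
      have h := key2 k hk 1
      rw [Nat.cast_one, ← h]
      apply Finset.sum_congr rfl
      intro j hj
      have h1 : (1 + j).choose (j + 1) = 1 := by
        rw [Nat.add_comm 1 j, Nat.choose_self]
      have h2 : ascQ (1 : ℚ) j = (j.factorial : ℚ) := by
        have := ascQ_cast 0 j
        simpa using this
      rw [h1, h2]
      push_cast
      ring
  | succ n hn ih =>
      rw [Finset.sum_Icc_succ_top (by omega : 1 ≤ n + 1), ih]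
      have hstep : ((n : ℚ) + 1) ^ k
          = ∑ j ∈ Finset.Icc 1 k, (-1 : ℚ) ^ (k - j) * (j.factorial : ℚ) * (S2 k j : ℚ)
              * ((n + j).choose j : ℚ) := by
        rw [← key2 k hk ((n : ℚ) + 1)]
        apply Finset.sum_congr rfl
        intro j hj
        rw [ascQ_cast n j]
        ring
      push_cast
      rw [hstep, ← Finset.sum_add_distrib]
      apply Finset.sum_congr rfl
      intro j hj
      have hpascal : (n + 1 + j).choose (j + 1) = (n + j).choose (j + 1) + (n + j).choose j := by
        rw [show n + 1 + j = (n + j) + 1 by omega]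
        rw [Nat.choose_succ_succ]
        simp [Nat.succ_eq_add_one]
        omega
      rw [hpascal]
      push_cast
      ring
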